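/- Define operators on polynomials in s_0, s_1, s_2, ... by a_i = multiplication by s_i for i > 0, a_0 = 0, and a_i = (-i)·∂/∂s_{-i} for i < 0; set Λ_m = (1/2)·Σ_{i∈ℤ} a_i a_{m-i} and M_m = (1/6)·Σ_{i,j∈ℤ} :a_i a_j a_{m-i-j}:, where :a_{i_1}···a_{i_r}: denotes the product rearranged so the indices are in non-increasing order. Then, as operators, L_0 + L_2 = s_0²·∂/∂s_2 + s_0·Λ_{-2} + M_{-2} and K_0 + K_2 = M_2, where L_0 = (1/2)·Σ_{i=0}^∞ Σ_{j=0}^{i} (i+2)·s_j s_{i-j}·∂/∂s_{i+2}, L_2 = (1/2)·Σ_{i=2}^∞ s_{i-2}·Σ_{j=1}^{i-1} j(i-j)·∂²/(∂s_j ∂s_{i-j}), K_0 = (1/2)·Σ_{i=3}^∞ Σ_{j=1}^{i-1} (i-2)·s_j s_{i-j}·∂/∂s_{i-2}, and K_2 = (1/2)·Σ_{i=2}^∞ Σ_{j=1}^{i-1} j(i-j)·s_{i+2}·∂²/(∂s_j ∂s_{i-j}). -/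

import Mathlib

open scoped Classical

open MvPolynomial in
/-- The operator `L₀ = (1/2) Σ_{i≥0} Σ_{j=0}^{i} (i+2) s_j s_{i-j} ∂/∂s_{i+2}`
acting on polynomials in `s₀, s₁, s₂, …`. -/
noncomputable def L0poly (f : MvPolynomial ℕ ℚ) : MvPolynomial ℕ ℚ :=
  (1 / 2 : ℚ) • ∑ᶠ i : ℕ, ∑ j ∈ Finset.range (i + 1),
    ((i + 2 : ℕ) : ℚ) • (X j * X (i - j) * pderiv (i + 2) f)

open MvPolynomial in
/-- The operator `L₂ = (1/2) Σ_{i≥2} s_{i-2} Σ_{j=1}^{i-1} j(i-j) ∂²/∂s_j∂s_{i-j}`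
acting on polynomials. -/
noncomputable def L2poly (f : MvPolynomial ℕ ℚ) : MvPolynomial ℕ ℚ :=
  (1 / 2 : ℚ) • ∑ᶠ i ∈ Set.Ici (2 : ℕ), ∑ j ∈ Finset.Ioo 0 i,
    ((j * (i - j) : ℕ) : ℚ) • (X (i - 2) * pderiv j (pderiv (i - j) f))

open MvPolynomial in
/-- The operator `K₀ = (1/2) Σ_{i≥3} Σ_{j=1}^{i-1} (i-2) s_j s_{i-j} ∂/∂s_{i-2}`
acting on polynomials. -/
noncomputable def K0poly (f : MvPolynomial ℕ ℚ) : MvPolynomial ℕ ℚ :=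
  (1 / 2 : ℚ) • ∑ᶠ i ∈ Set.Ici (3 : ℕ), ∑ j ∈ Finset.Ioo 0 i,
    ((i - 2 : ℕ) : ℚ) • (X j * X (i - j) * pderiv (i - 2) f)

open MvPolynomial in
/-- The operator `K₂ = (1/2) Σ_{i≥2} Σ_{j=1}^{i-1} j(i-j) s_{i+2} ∂²/∂s_j∂s_{i-j}`
acting on polynomials. -/
noncomputable def K2poly (f : MvPolynomial ℕ ℚ) : MvPolynomial ℕ ℚ :=
  (1 / 2 : ℚ) • ∑ᶠ i ∈ Set.Ici (2 : ℕ), ∑ j ∈ Finset.Ioo 0 i,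
    ((j * (i - j) : ℕ) : ℚ) • (X (i + 2) * pderiv j (pderiv (i - j) f))

open MvPolynomial in
/-- The bosonic creation-annihilation operators: `a_i` is multiplication by
`s_i` for `i > 0`, zero for `i = 0`, and `(-i)∂/∂s_{-i}` for `i < 0`. -/
noncomputable def aop (i : ℤ) (f : MvPolynomial ℕ ℚ) : MvPolynomial ℕ ℚ :=
  if 0 < i then X i.toNat * f
  else if i = 0 then 0
  else (((-i).toNat : ℕ) : ℚ) • pderiv (-i).toNat f

/-- The operator `Λ_m = (1/2) Σ_{i∈ℤ} a_i a_{m-i}` (the summands are already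
normally ordered since `a_i` and `a_{m-i}` commute unless `i = m - i`). -/
noncomputable def LamZ (m : ℤ) (f : MvPolynomial ℕ ℚ) : MvPolynomial ℕ ℚ :=
  (1 / 2 : ℚ) • ∑ᶠ i : ℤ, aop i (aop (m - i) f)

/-- The operator `M_m = (1/6) Σ_{i,j∈ℤ} :a_i a_j a_{m-i-j}:`, where the normal
ordering `:a_{i₁}⋯a_{i_r}:` rearranges the factors so that the indices are
non-increasing from left to right. -/
noncomputable def Mord (m : ℤ) (f : MvPolynomial ℕ ℚ) : MvPolynomial ℕ ℚ :=
  (1 / 6 : ℚ) • ∑ᶠ i : ℤ, ∑ᶠ j : ℤ,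
    (let k := m - i - j
     let hi := max i (max j k)
     let lo := min i (min j k)
     aop hi (aop (i + j + k - hi - lo) (aop lo f)))


namespace Stmt13

open MvPolynomial

lemma aop_pos {i : ℤ} (h : 0 < i) (f : MvPolynomial ℕ ℚ) :
    aop i f = X i.toNat * f := if_pos h

lemma aop_neg {i : ℤ} (h : i < 0) (f : MvPolynomial ℕ ℚ) :
    aop i f = (((-i).toNat : ℕ) : ℚ) • pderiv (-i).toNat f := by
  rw [aop, if_neg (by omega), if_neg (by omega)]

lemma aop_zeroIdx (f : MvPolynomial ℕ ℚ) : aop 0 f = 0 := by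
  rw [aop]; norm_num

lemma aop_zero (i : ℤ) : aop i 0 = 0 := by
  rcases lt_trichotomy i 0 with h | h | h
  · rw [aop_neg h]; simp
  · rw [h, aop_zeroIdx]
  · rw [aop_pos h]; simp

lemma pderiv_comm (i j : ℕ) (f : MvPolynomial ℕ ℚ) :
    pderiv i (pderiv j f) = pderiv j (pderiv i f) := by
  induction f using MvPolynomial.induction_on' with
  | add p q hp hq => simp [hp, hq]
  | monomial s a =>
    rcases eq_or_ne i j with rfl | hij
    · rfl
    · simp only [pderiv_monomial]
      rw [Finsupp.tsub_apply, Finsupp.tsub_apply,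
        Finsupp.single_eq_of_ne hij, Finsupp.single_eq_of_ne (Ne.symm hij)]
      congr 1
      · rw [tsub_tsub, tsub_tsub, add_comm]
      · push_cast [Nat.sub_zero]; ring

lemma pderiv_X_mul {a n : ℕ} (h : a ≠ n) (g : MvPolynomial ℕ ℚ) :
    pderiv n (X a * g) = X a * pderiv n g := by
  rw [pderiv_mul, pderiv_X_of_ne h, zero_mul, zero_add]


/-- Normally ordered product of three `aop`s. -/
noncomputable def Sop (f : MvPolynomial ℕ ℚ) (a b c : ℤ) : MvPolynomial ℕ ℚ :=
  aop (max a (max b c))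
    (aop (a + b + c - max a (max b c) - min a (min b c)) (aop (min a (min b c)) f))

lemma Sop_swap1 (f : MvPolynomial ℕ ℚ) (a b c : ℤ) : Sop f b a c = Sop f a b c := by
  unfold Sop
  rw [max_left_comm b a c, min_left_comm b a c, show b + a + c = a + b + c from by ring]

lemma Sop_swap2 (f : MvPolynomial ℕ ℚ) (a b c : ℤ) : Sop f a c b = Sop f a b c := by
  unfold Sop
  rw [max_comm c b, min_comm c b, show a + c + b = a + b + c from by ring]

lemma Sop_sorted (f : MvPolynomial ℕ ℚ) {a b c : ℤ} (h1 : c ≤ b) (h2 : b ≤ a) :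
    Sop f a b c = aop a (aop b (aop c f)) := by
  unfold Sop
  rw [max_eq_left h1, max_eq_left h2, min_eq_right h1, min_eq_right (h1.trans h2),
    show a + b + c - a - c = b from by ring]

lemma Sop_zero (f : MvPolynomial ℕ ℚ) {a b c : ℤ} (h : a = 0 ∨ b = 0 ∨ c = 0) :
    Sop f a b c = 0 := by
  have key : ∀ x y z : ℤ, z ≤ y → y ≤ x → (x = 0 ∨ y = 0 ∨ z = 0) → Sop f x y z = 0 := by
    intro x y z h1 h2 h
    rw [Sop_sorted f h1 h2]
    rcases h with rfl | rfl | rfl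
    · rw [aop_zeroIdx]
    · rw [aop_zeroIdx, aop_zero]
    · rw [aop_zeroIdx, aop_zero, aop_zero]
  rcases le_total a b with h1 | h1 <;> rcases le_total b c with h2 | h2 <;>
    rcases le_total a c with h3 | h3
  · rw [Sop_swap2 f a c b, Sop_swap1 f c a b, Sop_swap2 f c b a]; exact key c b a h1 h2 (by tauto)
  · rw [Sop_swap2 f a c b, Sop_swap1 f c a b, Sop_swap2 f c b a]; exact key c b a h1 h2 (by tauto)
  · rw [Sop_swap1 f b a c, Sop_swap2 f b c a]; exact key b c a h3 h2 (by tauto)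
  · rw [Sop_swap1 f b a c]; exact key b a c h3 h1 (by tauto)
  · rw [Sop_swap2 f a c b, Sop_swap1 f c a b]; exact key c a b h1 h3 (by tauto)
  · rw [Sop_swap2 f a c b]; exact key a c b h2 h3 (by tauto)
  · exact key a b c h2 h1 (by tauto)
  · exact key a b c h2 h1 (by tauto)


lemma Sop_pp (f : MvPolynomial ℕ ℚ) {a b c : ℤ} (ha : 0 < a) (hb : 0 < b) (hc : c < 0) :
    Sop f a b c
      = (((-c).toNat : ℕ) : ℚ) • (X a.toNat * X b.toNat * pderiv (-c).toNat f) := by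
  rcases le_total b a with h | h
  · rw [Sop_sorted f (by omega) h, aop_neg hc, aop_pos hb, aop_pos ha,
      mul_smul_comm, mul_smul_comm]
    congr 1
    ring
  · rw [← Sop_swap1 f a b c, Sop_sorted f (by omega) h, aop_neg hc, aop_pos ha, aop_pos hb,
      mul_smul_comm, mul_smul_comm]
    congr 1
    ring

lemma Sop_pnn (f : MvPolynomial ℕ ℚ) {a b c : ℤ} (ha : 0 < a) (hb : b < 0) (hc : c < 0) :
    Sop f a b c
      = (((-b).toNat * (-c).toNat : ℕ) : ℚ) •
          (X a.toNat * pderiv (-b).toNat (pderiv (-c).toNat f)) := by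
  rcases le_total c b with h | h
  · rw [Sop_sorted f h (by omega), aop_neg hc, aop_neg hb, aop_pos ha,
      Derivation.map_smul, smul_smul, mul_smul_comm]
    congr 1
    push_cast
    ring
  · rw [← Sop_swap2 f a b c, Sop_sorted f h (by omega), aop_neg hb, aop_neg hc, aop_pos ha,
      Derivation.map_smul, smul_smul, mul_smul_comm, pderiv_comm]
    congr 1
    push_cast
    ring


lemma pd2_left {f : MvPolynomial ℕ ℚ} {N : ℕ} (hN : ∀ n, N ≤ n → pderiv n f = 0)
    {p : ℕ} (q : ℕ) (h : N ≤ p) : pderiv p (pderiv q f) = 0 := by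
  rw [pderiv_comm, hN p h, map_zero]

lemma pd2_right {f : MvPolynomial ℕ ℚ} {N : ℕ} (hN : ∀ n, N ≤ n → pderiv n f = 0)
    (p : ℕ) {q : ℕ} (h : N ≤ q) : pderiv p (pderiv q f) = 0 := by
  rw [hN q h, map_zero]

lemma Sop_small {f : MvPolynomial ℕ ℚ} {N : ℕ} (hN1 : 1 ≤ N)
    (hN : ∀ n, N ≤ n → pderiv n f = 0) {a b c : ℤ}
    (h : min a (min b c) ≤ -(N : ℤ)) : Sop f a b c = 0 := by
  unfold Sop
  have h1 : aop (min a (min b c)) f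
      = (((-(min a (min b c))).toNat : ℕ) : ℚ) • pderiv (-(min a (min b c))).toNat f :=
    aop_neg (by omega) f
  rw [h1, hN _ (by omega), smul_zero, aop_zero, aop_zero]

lemma Sop_support {f : MvPolynomial ℕ ℚ} {N : ℕ} (hN1 : 1 ≤ N)
    (hN : ∀ n, N ≤ n → pderiv n f = 0) {a b c : ℤ}
    (h : Sop f a b c ≠ 0) : -(N : ℤ) < min a (min b c) := by
  by_contra h'
  exact h (Sop_small hN1 hN (by omega))

/-- canonical "two multiplications, one derivative" double sum -/
noncomputable def SAm (m : ℤ) (B : ℕ) (f : MvPolynomial ℕ ℚ) : MvPolynomial ℕ ℚ :=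
  ∑ a ∈ Finset.Icc 1 B, ∑ b ∈ Finset.Icc 1 B,
    if 0 < (a : ℤ) + b - m then
      ((((a : ℤ) + b - m).toNat : ℕ) : ℚ) • (X a * X b * pderiv ((a : ℤ) + b - m).toNat f)
    else 0

/-- canonical "one multiplication, two derivatives" double sum -/
noncomputable def SCm (m : ℤ) (B : ℕ) (f : MvPolynomial ℕ ℚ) : MvPolynomial ℕ ℚ :=
  ∑ p ∈ Finset.Icc 1 B, ∑ q ∈ Finset.Icc 1 B,
    if 0 < (p : ℤ) + q + m then
      ((p * q : ℕ) : ℚ) • (X ((p : ℤ) + q + m).toNat * pderiv p (pderiv q f))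
    else 0

/-- canonical single sum -/
noncomputable def SEb (B : ℕ) (f : MvPolynomial ℕ ℚ) : MvPolynomial ℕ ℚ :=
  ∑ a ∈ Finset.Icc 1 B, ((a + 2 : ℕ) : ℚ) • (X a * pderiv (a + 2) f)


/-- the integer box `[-B, B]` -/
noncomputable def box (B : ℕ) : Finset ℤ := Finset.Icc (-(B : ℤ)) (B : ℤ)

lemma mem_box {B : ℕ} {x : ℤ} : x ∈ box B ↔ -(B : ℤ) ≤ x ∧ x ≤ (B : ℤ) := by
  simp [box]

section Regions

variable {m : ℤ} {f : MvPolynomial ℕ ℚ} {N B : ℕ}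

/-- region `i > 0, j > 0, k < 0` -/
lemma reg_pp (hm : m = -2 ∨ m = 2) (hN1 : 1 ≤ N) (hB : B = 2 * N + 3)
    (hN : ∀ n, N ≤ n → pderiv n f = 0) :
    ∑ p ∈ (box B ×ˢ box B).filter
        (fun p => 0 < p.1 ∧ 0 < p.2 ∧ m - p.1 - p.2 < 0), Sop f p.1 p.2 (m - p.1 - p.2)
      = SAm m B f := by
  have hval : ∀ i j : ℤ, 0 < i → 0 < j → m - i - j < 0 →
      Sop f i j (m - i - j) =
        (if 0 < (i.toNat : ℤ) + (j.toNat : ℤ) - m then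
          ((((i.toNat : ℤ) + (j.toNat : ℤ) - m).toNat : ℕ) : ℚ) •
            (X i.toNat * X j.toNat * pderiv ((i.toNat : ℤ) + (j.toNat : ℤ) - m).toNat f)
        else 0) := by
    intro i j hi hj hk
    rw [Sop_pp f hi hj hk, if_pos (by omega)]
    have he : ((i.toNat : ℤ) + (j.toNat : ℤ) - m).toNat = (-(m - i - j)).toNat := by omega
    rw [he]
  rw [SAm, ← Finset.sum_product']
  refine Finset.sum_bij_ne_zero (fun p _ _ => (p.1.toNat, p.2.toNat)) ?_ ?_ ?_ ?_
  · intro p h₁ h₂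
    simp only [Finset.mem_filter, Finset.mem_product, mem_box] at h₁
    simp only [Finset.mem_product, Finset.mem_Icc]
    omega
  · intro p₁ h₁₁ h₁₂ p₂ h₂₁ h₂₂ heq
    simp only [Finset.mem_filter, Finset.mem_product, mem_box] at h₁₁ h₂₁
    simp only [Prod.mk.injEq] at heq
    exact Prod.ext (by omega) (by omega)
  · intro b hb hgb
    simp only [Finset.mem_product, Finset.mem_Icc] at hb
    have hcond : 0 < (b.1 : ℤ) + (b.2 : ℤ) - m := by
      by_contra hc
      exact hgb (if_neg hc)
    refine ⟨((b.1 : ℤ), (b.2 : ℤ)), ?_, ?_, ?_⟩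
    · simp only [Finset.mem_filter, Finset.mem_product, mem_box]
      omega
    · rw [hval _ _ (by omega) (by omega) (by omega)]
      simpa only [Int.toNat_natCast] using hgb
    · simp
  · intro p h₁ h₂
    simp only [Finset.mem_filter, Finset.mem_product, mem_box] at h₁
    exact hval _ _ h₁.2.1 h₁.2.2.1 h₁.2.2.2


/-- region `i > 0, j < 0, k > 0` -/
lemma reg_pnp (hm : m = -2 ∨ m = 2) (hN1 : 1 ≤ N) (hB : B = 2 * N + 3)
    (hN : ∀ n, N ≤ n → pderiv n f = 0) :
    ∑ p ∈ (box B ×ˢ box B).filter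
        (fun p => 0 < p.1 ∧ p.2 < 0 ∧ 0 < m - p.1 - p.2), Sop f p.1 p.2 (m - p.1 - p.2)
      = SAm m B f := by
  have hval : ∀ (i j : ℤ) (a b : ℕ), 0 < i → j < 0 → 0 < m - i - j →
      (a : ℤ) = i → (b : ℤ) = m - i - j →
      Sop f i j (m - i - j) =
        (if 0 < (a : ℤ) + (b : ℤ) - m then
          ((((a : ℤ) + (b : ℤ) - m).toNat : ℕ) : ℚ) •
            (X a * X b * pderiv ((a : ℤ) + (b : ℤ) - m).toNat f)
        else 0) := by
    intro i j a b hi hj hk ha hb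
    rw [Sop_swap2 f i (m - i - j) j, Sop_pp f hi hk hj, if_pos (by omega),
      show i.toNat = a from by omega, show (m - i - j).toNat = b from by omega,
      show ((a : ℤ) + (b : ℤ) - m).toNat = (-j).toNat from by omega]
  rw [SAm, ← Finset.sum_product']
  refine Finset.sum_bij_ne_zero (fun p _ _ => (p.1.toNat, (m - p.1 - p.2).toNat)) ?_ ?_ ?_ ?_
  · intro p h₁ h₂
    have hs := Sop_support hN1 hN h₂
    have l1 := min_le_left p.1 (min p.2 (m - p.1 - p.2))
    have l2 := (min_le_right p.1 (min p.2 (m - p.1 - p.2))).trans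
      (min_le_left p.2 (m - p.1 - p.2))
    have l3 := (min_le_right p.1 (min p.2 (m - p.1 - p.2))).trans
      (min_le_right p.2 (m - p.1 - p.2))
    simp only [Finset.mem_filter, Finset.mem_product, mem_box] at h₁
    simp only [Finset.mem_product, Finset.mem_Icc]
    omega
  · intro p₁ h₁₁ h₁₂ p₂ h₂₁ h₂₂ heq
    simp only [Finset.mem_filter, Finset.mem_product, mem_box] at h₁₁ h₂₁
    simp only [Prod.mk.injEq] at heq
    exact Prod.ext (by omega) (by omega)
  · intro b hb hgb
    simp only [Finset.mem_product, Finset.mem_Icc] at hb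
    have hcond : 0 < (b.1 : ℤ) + (b.2 : ℤ) - m := by
      by_contra hc
      exact hgb (if_neg hc)
    have hd : ((b.1 : ℤ) + (b.2 : ℤ) - m).toNat < N := by
      by_contra hd
      exact hgb (by rw [if_pos hcond, hN _ (by omega), mul_zero, smul_zero])
    refine ⟨((b.1 : ℤ), m - b.1 - b.2), ?_, ?_, ?_⟩
    · simp only [Finset.mem_filter, Finset.mem_product, mem_box]
      omega
    · rw [hval _ _ b.1 b.2 (by omega) (by omega) (by omega) (by omega) (by omega)]
      exact hgb
    · have : m - (b.1 : ℤ) - (m - b.1 - b.2) = (b.2 : ℤ) := by ring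
      dsimp only
      rw [this]
      simp
  · intro p h₁ h₂
    simp only [Finset.mem_filter, Finset.mem_product, mem_box] at h₁
    dsimp only
    exact hval _ _ _ _ h₁.2.1 h₁.2.2.1 h₁.2.2.2 (by omega) (by omega)

/-- region `i < 0, j > 0, k > 0` -/
lemma reg_npp (hm : m = -2 ∨ m = 2) (hN1 : 1 ≤ N) (hB : B = 2 * N + 3)
    (hN : ∀ n, N ≤ n → pderiv n f = 0) :
    ∑ p ∈ (box B ×ˢ box B).filter
        (fun p => p.1 < 0 ∧ 0 < p.2 ∧ 0 < m - p.1 - p.2), Sop f p.1 p.2 (m - p.1 - p.2)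
      = SAm m B f := by
  have hval : ∀ (i j : ℤ) (a b : ℕ), i < 0 → 0 < j → 0 < m - i - j →
      (a : ℤ) = j → (b : ℤ) = m - i - j →
      Sop f i j (m - i - j) =
        (if 0 < (a : ℤ) + (b : ℤ) - m then
          ((((a : ℤ) + (b : ℤ) - m).toNat : ℕ) : ℚ) •
            (X a * X b * pderiv ((a : ℤ) + (b : ℤ) - m).toNat f)
        else 0) := by
    intro i j a b hi hj hk ha hb
    rw [Sop_swap1 f j i (m - i - j), Sop_swap2 f j (m - i - j) i, Sop_pp f hj hk hi,
      if_pos (by omega),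
      show j.toNat = a from by omega, show (m - i - j).toNat = b from by omega,
      show ((a : ℤ) + (b : ℤ) - m).toNat = (-i).toNat from by omega]
  rw [SAm, ← Finset.sum_product']
  refine Finset.sum_bij_ne_zero (fun p _ _ => (p.2.toNat, (m - p.1 - p.2).toNat)) ?_ ?_ ?_ ?_
  · intro p h₁ h₂
    have hs := Sop_support hN1 hN h₂
    have l1 := min_le_left p.1 (min p.2 (m - p.1 - p.2))
    have l2 := (min_le_right p.1 (min p.2 (m - p.1 - p.2))).trans
      (min_le_left p.2 (m - p.1 - p.2))
    have l3 := (min_le_right p.1 (min p.2 (m - p.1 - p.2))).trans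
      (min_le_right p.2 (m - p.1 - p.2))
    simp only [Finset.mem_filter, Finset.mem_product, mem_box] at h₁
    simp only [Finset.mem_product, Finset.mem_Icc]
    omega
  · intro p₁ h₁₁ h₁₂ p₂ h₂₁ h₂₂ heq
    simp only [Finset.mem_filter, Finset.mem_product, mem_box] at h₁₁ h₂₁
    simp only [Prod.mk.injEq] at heq
    exact Prod.ext (by omega) (by omega)
  · intro b hb hgb
    simp only [Finset.mem_product, Finset.mem_Icc] at hb
    have hcond : 0 < (b.1 : ℤ) + (b.2 : ℤ) - m := by
      by_contra hc
      exact hgb (if_neg hc)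
    have hd : ((b.1 : ℤ) + (b.2 : ℤ) - m).toNat < N := by
      by_contra hd
      exact hgb (by rw [if_pos hcond, hN _ (by omega), mul_zero, smul_zero])
    refine ⟨(m - b.2 - b.1, (b.1 : ℤ)), ?_, ?_, ?_⟩
    · simp only [Finset.mem_filter, Finset.mem_product, mem_box]
      omega
    · rw [hval _ _ b.1 b.2 (by omega) (by omega) (by omega) (by omega) (by omega)]
      exact hgb
    · have : m - (m - (b.2 : ℤ) - b.1) - (b.1 : ℤ) = (b.2 : ℤ) := by ring
      dsimp only
      rw [this]
      simp
  · intro p h₁ h₂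
    simp only [Finset.mem_filter, Finset.mem_product, mem_box] at h₁
    dsimp only
    exact hval _ _ _ _ h₁.2.1 h₁.2.2.1 h₁.2.2.2 (by omega) (by omega)

/-- region `i > 0, j < 0, k < 0` -/
lemma reg_pnn (hm : m = -2 ∨ m = 2) (hN1 : 1 ≤ N) (hB : B = 2 * N + 3)
    (hN : ∀ n, N ≤ n → pderiv n f = 0) :
    ∑ p ∈ (box B ×ˢ box B).filter
        (fun p => 0 < p.1 ∧ p.2 < 0 ∧ m - p.1 - p.2 < 0), Sop f p.1 p.2 (m - p.1 - p.2)
      = SCm m B f := by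
  have hval : ∀ (i j : ℤ) (p q : ℕ), 0 < i → j < 0 → m - i - j < 0 →
      (p : ℤ) = -j → (q : ℤ) = -(m - i - j) →
      Sop f i j (m - i - j) =
        (if 0 < (p : ℤ) + (q : ℤ) + m then
          ((p * q : ℕ) : ℚ) • (X ((p : ℤ) + (q : ℤ) + m).toNat * pderiv p (pderiv q f))
        else 0) := by
    intro i j p q hi hj hk hp hq
    rw [Sop_pnn f hi hj hk, show (-j).toNat = p from by omega,
      show (-(m - i - j)).toNat = q from by omega, if_pos (by omega),
      show ((p : ℤ) + (q : ℤ) + m).toNat = i.toNat from by omega]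
  rw [SCm, ← Finset.sum_product']
  refine Finset.sum_bij_ne_zero (fun p _ _ => ((-p.2).toNat, (-(m - p.1 - p.2)).toNat)) ?_ ?_ ?_ ?_
  · intro p h₁ h₂
    have hs := Sop_support hN1 hN h₂
    have l1 := min_le_left p.1 (min p.2 (m - p.1 - p.2))
    have l2 := (min_le_right p.1 (min p.2 (m - p.1 - p.2))).trans
      (min_le_left p.2 (m - p.1 - p.2))
    have l3 := (min_le_right p.1 (min p.2 (m - p.1 - p.2))).trans
      (min_le_right p.2 (m - p.1 - p.2))
    simp only [Finset.mem_filter, Finset.mem_product, mem_box] at h₁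
    simp only [Finset.mem_product, Finset.mem_Icc]
    omega
  · intro p₁ h₁₁ h₁₂ p₂ h₂₁ h₂₂ heq
    simp only [Finset.mem_filter, Finset.mem_product, mem_box] at h₁₁ h₂₁
    simp only [Prod.mk.injEq] at heq
    exact Prod.ext (by omega) (by omega)
  · intro b hb hgb
    simp only [Finset.mem_product, Finset.mem_Icc] at hb
    have hcond : 0 < (b.1 : ℤ) + (b.2 : ℤ) + m := by
      by_contra hc
      exact hgb (if_neg hc)
    have hd1 : b.1 < N := by
      by_contra hd
      exact hgb (by rw [if_pos hcond, pd2_left hN b.2 (by omega), mul_zero, smul_zero])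
    have hd2 : b.2 < N := by
      by_contra hd
      exact hgb (by rw [if_pos hcond, pd2_right hN b.1 (by omega), mul_zero, smul_zero])
    refine ⟨(m + b.1 + b.2, -(b.1 : ℤ)), ?_, ?_, ?_⟩
    · simp only [Finset.mem_filter, Finset.mem_product, mem_box]
      omega
    · rw [hval _ _ b.1 b.2 (by omega) (by omega) (by omega) (by omega) (by omega)]
      exact hgb
    · dsimp only
      simp only [neg_neg, Int.toNat_natCast,
        show -(m - (m + (b.1 : ℤ) + b.2) - -(b.1 : ℤ)) = (b.2 : ℤ) from by ring,
        Int.toNat_natCast]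
  · intro p h₁ h₂
    simp only [Finset.mem_filter, Finset.mem_product, mem_box] at h₁
    dsimp only
    exact hval _ _ _ _ h₁.2.1 h₁.2.2.1 h₁.2.2.2 (by omega) (by omega)

/-- region `i < 0, j > 0, k < 0` -/
lemma reg_npn (hm : m = -2 ∨ m = 2) (hN1 : 1 ≤ N) (hB : B = 2 * N + 3)
    (hN : ∀ n, N ≤ n → pderiv n f = 0) :
    ∑ p ∈ (box B ×ˢ box B).filter
        (fun p => p.1 < 0 ∧ 0 < p.2 ∧ m - p.1 - p.2 < 0), Sop f p.1 p.2 (m - p.1 - p.2)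
      = SCm m B f := by
  have hval : ∀ (i j : ℤ) (p q : ℕ), i < 0 → 0 < j → m - i - j < 0 →
      (p : ℤ) = -i → (q : ℤ) = -(m - i - j) →
      Sop f i j (m - i - j) =
        (if 0 < (p : ℤ) + (q : ℤ) + m then
          ((p * q : ℕ) : ℚ) • (X ((p : ℤ) + (q : ℤ) + m).toNat * pderiv p (pderiv q f))
        else 0) := by
    intro i j p q hi hj hk hp hq
    rw [Sop_swap1 f j i (m - i - j), Sop_pnn f hj hi hk, show (-i).toNat = p from by omega,
      show (-(m - i - j)).toNat = q from by omega, if_pos (by omega),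
      show ((p : ℤ) + (q : ℤ) + m).toNat = j.toNat from by omega]
  rw [SCm, ← Finset.sum_product']
  refine Finset.sum_bij_ne_zero (fun p _ _ => ((-p.1).toNat, (-(m - p.1 - p.2)).toNat)) ?_ ?_ ?_ ?_
  · intro p h₁ h₂
    have hs := Sop_support hN1 hN h₂
    have l1 := min_le_left p.1 (min p.2 (m - p.1 - p.2))
    have l2 := (min_le_right p.1 (min p.2 (m - p.1 - p.2))).trans
      (min_le_left p.2 (m - p.1 - p.2))
    have l3 := (min_le_right p.1 (min p.2 (m - p.1 - p.2))).trans
      (min_le_right p.2 (m - p.1 - p.2))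
    simp only [Finset.mem_filter, Finset.mem_product, mem_box] at h₁
    simp only [Finset.mem_product, Finset.mem_Icc]
    omega
  · intro p₁ h₁₁ h₁₂ p₂ h₂₁ h₂₂ heq
    simp only [Finset.mem_filter, Finset.mem_product, mem_box] at h₁₁ h₂₁
    simp only [Prod.mk.injEq] at heq
    exact Prod.ext (by omega) (by omega)
  · intro b hb hgb
    simp only [Finset.mem_product, Finset.mem_Icc] at hb
    have hcond : 0 < (b.1 : ℤ) + (b.2 : ℤ) + m := by
      by_contra hc
      exact hgb (if_neg hc)
    have hd1 : b.1 < N := by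
      by_contra hd
      exact hgb (by rw [if_pos hcond, pd2_left hN b.2 (by omega), mul_zero, smul_zero])
    have hd2 : b.2 < N := by
      by_contra hd
      exact hgb (by rw [if_pos hcond, pd2_right hN b.1 (by omega), mul_zero, smul_zero])
    refine ⟨(-(b.1 : ℤ), m + b.1 + b.2), ?_, ?_, ?_⟩
    · simp only [Finset.mem_filter, Finset.mem_product, mem_box]
      omega
    · rw [hval _ _ b.1 b.2 (by omega) (by omega) (by omega) (by omega) (by omega)]
      exact hgb
    · dsimp only
      simp only [neg_neg, Int.toNat_natCast,
        show -(m - -(b.1 : ℤ) - (m + (b.1 : ℤ) + b.2)) = (b.2 : ℤ) from by ring,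
        Int.toNat_natCast]
  · intro p h₁ h₂
    simp only [Finset.mem_filter, Finset.mem_product, mem_box] at h₁
    dsimp only
    exact hval _ _ _ _ h₁.2.1 h₁.2.2.1 h₁.2.2.2 (by omega) (by omega)

/-- region `i < 0, j < 0, k > 0` -/
lemma reg_nnp (hm : m = -2 ∨ m = 2) (hN1 : 1 ≤ N) (hB : B = 2 * N + 3)
    (hN : ∀ n, N ≤ n → pderiv n f = 0) :
    ∑ p ∈ (box B ×ˢ box B).filter
        (fun p => p.1 < 0 ∧ p.2 < 0 ∧ 0 < m - p.1 - p.2), Sop f p.1 p.2 (m - p.1 - p.2)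
      = SCm m B f := by
  have hval : ∀ (i j : ℤ) (p q : ℕ), i < 0 → j < 0 → 0 < m - i - j →
      (p : ℤ) = -i → (q : ℤ) = -j →
      Sop f i j (m - i - j) =
        (if 0 < (p : ℤ) + (q : ℤ) + m then
          ((p * q : ℕ) : ℚ) • (X ((p : ℤ) + (q : ℤ) + m).toNat * pderiv p (pderiv q f))
        else 0) := by
    intro i j p q hi hj hk hp hq
    rw [Sop_swap2 f i (m - i - j) j, Sop_swap1 f (m - i - j) i j, Sop_pnn f hk hi hj,
      show (-i).toNat = p from by omega, show (-j).toNat = q from by omega, if_pos (by omega),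
      show ((p : ℤ) + (q : ℤ) + m).toNat = (m - i - j).toNat from by omega]
  rw [SCm, ← Finset.sum_product']
  refine Finset.sum_bij_ne_zero (fun p _ _ => ((-p.1).toNat, (-p.2).toNat)) ?_ ?_ ?_ ?_
  · intro p h₁ h₂
    simp only [Finset.mem_filter, Finset.mem_product, mem_box] at h₁
    simp only [Finset.mem_product, Finset.mem_Icc]
    omega
  · intro p₁ h₁₁ h₁₂ p₂ h₂₁ h₂₂ heq
    simp only [Finset.mem_filter, Finset.mem_product, mem_box] at h₁₁ h₂₁
    simp only [Prod.mk.injEq] at heq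
    exact Prod.ext (by omega) (by omega)
  · intro b hb hgb
    simp only [Finset.mem_product, Finset.mem_Icc] at hb
    have hcond : 0 < (b.1 : ℤ) + (b.2 : ℤ) + m := by
      by_contra hc
      exact hgb (if_neg hc)
    refine ⟨(-(b.1 : ℤ), -(b.2 : ℤ)), ?_, ?_, ?_⟩
    · simp only [Finset.mem_filter, Finset.mem_product, mem_box]
      omega
    · rw [hval _ _ b.1 b.2 (by omega) (by omega) (by omega) (by omega) (by omega)]
      exact hgb
    · dsimp only
      simp only [neg_neg, Int.toNat_natCast]
  · intro p h₁ h₂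
    simp only [Finset.mem_filter, Finset.mem_product, mem_box] at h₁
    dsimp only
    exact hval _ _ _ _ h₁.2.1 h₁.2.2.1 h₁.2.2.2 (by omega) (by omega)

end Regions


lemma Mord_eq {m : ℤ} {f : MvPolynomial ℕ ℚ} {N B : ℕ}
    (hm : m = -2 ∨ m = 2) (hN1 : 1 ≤ N) (hB : B = 2 * N + 3)
    (hN : ∀ n, N ≤ n → pderiv n f = 0) :
    Mord m f = (1/2 : ℚ) • SAm m B f + (1/2 : ℚ) • SCm m B f := by
  have h0 : Mord m f = (1/6 : ℚ) • ∑ᶠ i : ℤ, ∑ᶠ j : ℤ, Sop f i j (m - i - j) := rfl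
  have hsup : ∀ i j : ℤ, Sop f i j (m - i - j) ≠ 0 → i ∈ box B ∧ j ∈ box B := by
    intro i j hne
    have hs := Sop_support hN1 hN hne
    have l1 := min_le_left i (min j (m - i - j))
    have l2 := (min_le_right i (min j (m - i - j))).trans (min_le_left j (m - i - j))
    have l3 := (min_le_right i (min j (m - i - j))).trans (min_le_right j (m - i - j))
    have h2 : ¬ (i = 0 ∨ j = 0 ∨ m - i - j = 0) := fun h => hne (Sop_zero f h)
    push_neg at h2
    simp only [mem_box]
    omega
  have hinner : ∀ i : ℤ, (∑ᶠ j : ℤ, Sop f i j (m - i - j))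
      = ∑ j ∈ box B, Sop f i j (m - i - j) := by
    intro i
    apply finsum_eq_sum_of_support_subset
    intro j hj
    rw [Function.mem_support] at hj
    exact Finset.mem_coe.mpr (hsup i j hj).2
  have houter : (∑ᶠ i : ℤ, ∑ᶠ j : ℤ, Sop f i j (m - i - j))
      = ∑ i ∈ box B, ∑ j ∈ box B, Sop f i j (m - i - j) := by
    rw [finsum_congr hinner]
    apply finsum_eq_sum_of_support_subset
    intro i hi
    rw [Function.mem_support] at hi
    have hex : ∃ j ∈ box B, Sop f i j (m - i - j) ≠ 0 := by
      by_contra hc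
      push_neg at hc
      exact hi (Finset.sum_eq_zero fun j hj => hc j hj)
    obtain ⟨j, _, hne⟩ := hex
    exact Finset.mem_coe.mpr (hsup i j hne).1
  rw [h0, houter, ← Finset.sum_product']
  have hsplit : ∀ p ∈ box B ×ˢ box B, Sop f p.1 p.2 (m - p.1 - p.2) =
        (if 0 < p.1 ∧ 0 < p.2 ∧ m - p.1 - p.2 < 0 then Sop f p.1 p.2 (m - p.1 - p.2) else 0)
      + (if 0 < p.1 ∧ p.2 < 0 ∧ 0 < m - p.1 - p.2 then Sop f p.1 p.2 (m - p.1 - p.2) else 0)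
      + (if p.1 < 0 ∧ 0 < p.2 ∧ 0 < m - p.1 - p.2 then Sop f p.1 p.2 (m - p.1 - p.2) else 0)
      + (if 0 < p.1 ∧ p.2 < 0 ∧ m - p.1 - p.2 < 0 then Sop f p.1 p.2 (m - p.1 - p.2) else 0)
      + (if p.1 < 0 ∧ 0 < p.2 ∧ m - p.1 - p.2 < 0 then Sop f p.1 p.2 (m - p.1 - p.2) else 0)
      + (if p.1 < 0 ∧ p.2 < 0 ∧ 0 < m - p.1 - p.2 then Sop f p.1 p.2 (m - p.1 - p.2) else 0) := by
    intro p _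
    by_cases hz : p.1 = 0 ∨ p.2 = 0 ∨ m - p.1 - p.2 = 0
    · rw [Sop_zero f hz]
      split_ifs <;> first | (exfalso; omega) | ring
    · push_neg at hz
      split_ifs <;> first | (exfalso; omega) | ring
  rw [Finset.sum_congr rfl hsplit]
  rw [Finset.sum_add_distrib, Finset.sum_add_distrib, Finset.sum_add_distrib,
    Finset.sum_add_distrib, Finset.sum_add_distrib]
  rw [← Finset.sum_filter, ← Finset.sum_filter, ← Finset.sum_filter, ← Finset.sum_filter,
    ← Finset.sum_filter, ← Finset.sum_filter]
  rw [reg_pp hm hN1 hB hN, reg_pnp hm hN1 hB hN, reg_npp hm hN1 hB hN, reg_pnn hm hN1 hB hN,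
    reg_npn hm hN1 hB hN, reg_nnp hm hN1 hB hN]
  module


section KL

variable {f : MvPolynomial ℕ ℚ} {N B : ℕ}

lemma K0_eq (hN1 : 1 ≤ N) (hB : B = 2 * N + 3) (hN : ∀ n, N ≤ n → pderiv n f = 0) :
    K0poly f = (1/2 : ℚ) • SAm 2 B f := by
  rw [K0poly]
  congr 1
  have hfin : (∑ᶠ i ∈ Set.Ici (3 : ℕ), ∑ j ∈ Finset.Ioo 0 i,
        ((i - 2 : ℕ) : ℚ) • (X j * X (i - j) * pderiv (i - 2) f))
      = ∑ i ∈ Finset.Icc 3 B, ∑ j ∈ Finset.Ioo 0 i,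
        ((i - 2 : ℕ) : ℚ) • (X j * X (i - j) * pderiv (i - 2) f) := by
    apply finsum_mem_eq_sum_of_subset
    · intro i hi
      simp only [Set.mem_inter_iff, Set.mem_Ici, Function.mem_support] at hi
      simp only [Finset.coe_Icc, Set.mem_Icc]
      refine ⟨hi.1, ?_⟩
      by_contra hgt
      refine hi.2 (Finset.sum_eq_zero fun j _ => ?_)
      rw [hN (i - 2) (by omega), mul_zero, smul_zero]
    · intro i hi
      simp only [Finset.coe_Icc, Set.mem_Icc] at hi
      exact hi.1
  rw [hfin, Finset.sum_sigma', SAm, ← Finset.sum_product']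
  have hval : ∀ (i j a b : ℕ), 1 ≤ j → j < i → 3 ≤ i → a = j → b = i - j →
      ((i - 2 : ℕ) : ℚ) • (X j * X (i - j) * pderiv (i - 2) f)
        = (if 0 < (a : ℤ) + (b : ℤ) - 2 then
            ((((a : ℤ) + (b : ℤ) - 2).toNat : ℕ) : ℚ) •
              (X a * X b * pderiv ((a : ℤ) + (b : ℤ) - 2).toNat f)
          else 0) := by
    intro i j a b h1 h2 h3 ha hb
    rw [if_pos (by omega), show a = j from ha, show b = i - j from hb,
      show ((j : ℤ) + (i - j : ℕ) - 2).toNat = i - 2 from by omega]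
  refine Finset.sum_bij_ne_zero (fun p _ _ => (p.2, p.1 - p.2)) ?_ ?_ ?_ ?_
  · intro p h₁ h₂
    simp only [Finset.mem_sigma, Finset.mem_Icc, Finset.mem_Ioo] at h₁
    simp only [Finset.mem_product, Finset.mem_Icc]
    omega
  · intro p₁ h₁₁ h₁₂ p₂ h₂₁ h₂₂ heq
    simp only [Finset.mem_sigma, Finset.mem_Icc, Finset.mem_Ioo] at h₁₁ h₂₁
    simp only [Prod.mk.injEq] at heq
    refine Sigma.ext (by omega) (heq_of_eq (by omega))
  · intro b hb hgb
    simp only [Finset.mem_product, Finset.mem_Icc] at hb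
    have hcond : 0 < (b.1 : ℤ) + (b.2 : ℤ) - 2 := by
      by_contra hc
      exact hgb (if_neg hc)
    have hd : ((b.1 : ℤ) + (b.2 : ℤ) - 2).toNat < N := by
      by_contra hd
      exact hgb (by rw [if_pos hcond, hN _ (by omega), mul_zero, smul_zero])
    refine ⟨⟨b.1 + b.2, b.1⟩, ?_, ?_, ?_⟩
    · simp only [Finset.mem_sigma, Finset.mem_Icc, Finset.mem_Ioo]
      omega
    · rw [hval (b.1 + b.2) b.1 b.1 b.2 (by omega) (by omega) (by omega) rfl (by omega)]
      exact hgb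
    · dsimp only
      rw [show b.1 + b.2 - b.1 = b.2 from by omega]
  · intro p h₁ h₂
    simp only [Finset.mem_sigma, Finset.mem_Icc, Finset.mem_Ioo] at h₁
    dsimp only
    exact hval p.1 p.2 p.2 (p.1 - p.2) (by omega) (by omega) (by omega) rfl rfl

lemma K2_eq (hN1 : 1 ≤ N) (hB : B = 2 * N + 3) (hN : ∀ n, N ≤ n → pderiv n f = 0) :
    K2poly f = (1/2 : ℚ) • SCm 2 B f := by
  rw [K2poly]
  congr 1
  have hfin : (∑ᶠ i ∈ Set.Ici (2 : ℕ), ∑ j ∈ Finset.Ioo 0 i,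
        ((j * (i - j) : ℕ) : ℚ) • (X (i + 2) * pderiv j (pderiv (i - j) f)))
      = ∑ i ∈ Finset.Icc 2 B, ∑ j ∈ Finset.Ioo 0 i,
        ((j * (i - j) : ℕ) : ℚ) • (X (i + 2) * pderiv j (pderiv (i - j) f)) := by
    apply finsum_mem_eq_sum_of_subset
    · intro i hi
      simp only [Set.mem_inter_iff, Set.mem_Ici, Function.mem_support] at hi
      simp only [Finset.coe_Icc, Set.mem_Icc]
      refine ⟨hi.1, ?_⟩
      by_contra hgt
      refine hi.2 (Finset.sum_eq_zero fun j hj => ?_)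
      simp only [Finset.mem_Ioo] at hj
      rcases le_or_gt N j with hc | hc
      · rw [pd2_left hN _ hc, mul_zero, smul_zero]
      · rw [pd2_right hN _ (show N ≤ i - j from by omega), mul_zero, smul_zero]
    · intro i hi
      simp only [Finset.coe_Icc, Set.mem_Icc] at hi
      exact hi.1
  rw [hfin, Finset.sum_sigma', SCm, ← Finset.sum_product']
  have hval : ∀ (i j p q : ℕ), 1 ≤ j → j < i → p = j → q = i - j →
      ((j * (i - j) : ℕ) : ℚ) • (X (i + 2) * pderiv j (pderiv (i - j) f))
        = (if 0 < (p : ℤ) + (q : ℤ) + 2 then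
            ((p * q : ℕ) : ℚ) • (X ((p : ℤ) + (q : ℤ) + 2).toNat * pderiv p (pderiv q f))
          else 0) := by
    intro i j p q h1 h2 hp hq
    rw [if_pos (by omega), show p = j from hp, show q = i - j from hq,
      show ((j : ℤ) + (i - j : ℕ) + 2).toNat = i + 2 from by omega]
  refine Finset.sum_bij_ne_zero (fun p _ _ => (p.2, p.1 - p.2)) ?_ ?_ ?_ ?_
  · intro p h₁ h₂
    simp only [Finset.mem_sigma, Finset.mem_Icc, Finset.mem_Ioo] at h₁
    simp only [Finset.mem_product, Finset.mem_Icc]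
    omega
  · intro p₁ h₁₁ h₁₂ p₂ h₂₁ h₂₂ heq
    simp only [Finset.mem_sigma, Finset.mem_Icc, Finset.mem_Ioo] at h₁₁ h₂₁
    simp only [Prod.mk.injEq] at heq
    refine Sigma.ext (by omega) (heq_of_eq (by omega))
  · intro b hb hgb
    simp only [Finset.mem_product, Finset.mem_Icc] at hb
    have hd1 : b.1 < N := by
      by_contra hd
      exact hgb (by rw [if_pos (by omega), pd2_left hN b.2 (by omega), mul_zero, smul_zero])
    have hd2 : b.2 < N := by
      by_contra hd
      exact hgb (by rw [if_pos (by omega), pd2_right hN b.1 (by omega), mul_zero, smul_zero])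
    refine ⟨⟨b.1 + b.2, b.1⟩, ?_, ?_, ?_⟩
    · simp only [Finset.mem_sigma, Finset.mem_Icc, Finset.mem_Ioo]
      omega
    · rw [hval (b.1 + b.2) b.1 b.1 b.2 (by omega) (by omega) rfl (by omega)]
      exact hgb
    · dsimp only
      rw [show b.1 + b.2 - b.1 = b.2 from by omega]
  · intro p h₁ h₂
    simp only [Finset.mem_sigma, Finset.mem_Icc, Finset.mem_Ioo] at h₁
    dsimp only
    exact hval p.1 p.2 p.2 (p.1 - p.2) (by omega) (by omega) rfl rfl


lemma L2_eq (hN1 : 1 ≤ N) (hB : B = 2 * N + 3) (hN : ∀ n, N ≤ n → pderiv n f = 0) :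
    L2poly f = (1/2 : ℚ) • SCm (-2) B f + (1/2 : ℚ) • (X 0 * pderiv 1 (pderiv 1 f)) := by
  rw [L2poly]
  have hfin : (∑ᶠ i ∈ Set.Ici (2 : ℕ), ∑ j ∈ Finset.Ioo 0 i,
        ((j * (i - j) : ℕ) : ℚ) • (X (i - 2) * pderiv j (pderiv (i - j) f)))
      = ∑ i ∈ Finset.Icc 2 B, ∑ j ∈ Finset.Ioo 0 i,
        ((j * (i - j) : ℕ) : ℚ) • (X (i - 2) * pderiv j (pderiv (i - j) f)) := by
    apply finsum_mem_eq_sum_of_subset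
    · intro i hi
      simp only [Set.mem_inter_iff, Set.mem_Ici, Function.mem_support] at hi
      simp only [Finset.coe_Icc, Set.mem_Icc]
      refine ⟨hi.1, ?_⟩
      by_contra hgt
      refine hi.2 (Finset.sum_eq_zero fun j hj => ?_)
      simp only [Finset.mem_Ioo] at hj
      rcases le_or_gt N j with hc | hc
      · rw [pd2_left hN _ hc, mul_zero, smul_zero]
      · rw [pd2_right hN _ (show N ≤ i - j from by omega), mul_zero, smul_zero]
    · intro i hi
      simp only [Finset.coe_Icc, Set.mem_Icc] at hi
      exact hi.1
  have hIcc : Finset.Icc 2 B = insert 2 (Finset.Icc 3 B) := by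
    ext x
    simp only [Finset.mem_Icc, Finset.mem_insert]
    omega
  rw [hfin, hIcc, Finset.sum_insert (by simp)]
  have h2 : (∑ j ∈ Finset.Ioo 0 2,
      ((j * (2 - j) : ℕ) : ℚ) • (X (2 - 2) * pderiv j (pderiv (2 - j) f)))
      = X 0 * pderiv 1 (pderiv 1 f) := by
    rw [show Finset.Ioo 0 2 = {1} from by decide]
    norm_num
  have hmain : (∑ i ∈ Finset.Icc 3 B, ∑ j ∈ Finset.Ioo 0 i,
        ((j * (i - j) : ℕ) : ℚ) • (X (i - 2) * pderiv j (pderiv (i - j) f)))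
      = SCm (-2) B f := by
    rw [Finset.sum_sigma', SCm, ← Finset.sum_product']
    have hval : ∀ (i j p q : ℕ), 1 ≤ j → j < i → 3 ≤ i → p = j → q = i - j →
        ((j * (i - j) : ℕ) : ℚ) • (X (i - 2) * pderiv j (pderiv (i - j) f))
          = (if 0 < (p : ℤ) + (q : ℤ) + (-2) then
              ((p * q : ℕ) : ℚ) • (X ((p : ℤ) + (q : ℤ) + (-2)).toNat * pderiv p (pderiv q f))
            else 0) := by
      intro i j p q h1 h2 h3 hp hq
      rw [if_pos (by omega), show p = j from hp, show q = i - j from hq,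
        show ((j : ℤ) + (i - j : ℕ) + (-2)).toNat = i - 2 from by omega]
    refine Finset.sum_bij_ne_zero (fun p _ _ => (p.2, p.1 - p.2)) ?_ ?_ ?_ ?_
    · intro p h₁ h₂
      simp only [Finset.mem_sigma, Finset.mem_Icc, Finset.mem_Ioo] at h₁
      simp only [Finset.mem_product, Finset.mem_Icc]
      omega
    · intro p₁ h₁₁ h₁₂ p₂ h₂₁ h₂₂ heq
      simp only [Finset.mem_sigma, Finset.mem_Icc, Finset.mem_Ioo] at h₁₁ h₂₁
      simp only [Prod.mk.injEq] at heq
      refine Sigma.ext (by omega) (heq_of_eq (by omega))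
    · intro b hb hgb
      simp only [Finset.mem_product, Finset.mem_Icc] at hb
      have hcond : 0 < (b.1 : ℤ) + (b.2 : ℤ) + (-2) := by
        by_contra hc
        exact hgb (if_neg hc)
      have hd1 : b.1 < N := by
        by_contra hd
        exact hgb (by rw [if_pos hcond, pd2_left hN b.2 (by omega), mul_zero, smul_zero])
      have hd2 : b.2 < N := by
        by_contra hd
        exact hgb (by rw [if_pos hcond, pd2_right hN b.1 (by omega), mul_zero, smul_zero])
      refine ⟨⟨b.1 + b.2, b.1⟩, ?_, ?_, ?_⟩
      · simp only [Finset.mem_sigma, Finset.mem_Icc, Finset.mem_Ioo]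
        omega
      · rw [hval (b.1 + b.2) b.1 b.1 b.2 (by omega) (by omega) (by omega) rfl (by omega)]
        exact hgb
      · dsimp only
        rw [show b.1 + b.2 - b.1 = b.2 from by omega]
    · intro p h₁ h₂
      simp only [Finset.mem_sigma, Finset.mem_Icc, Finset.mem_Ioo] at h₁
      dsimp only
      exact hval p.1 p.2 p.2 (p.1 - p.2) (by omega) (by omega) (by omega) rfl rfl
  rw [h2, hmain, smul_add]
  rw [add_comm]


lemma Lam_eq (hN1 : 1 ≤ N) (hB : B = 2 * N + 3) (hN : ∀ n, N ≤ n → pderiv n f = 0) :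
    LamZ (-2) f = SEb B f + (1/2 : ℚ) • pderiv 1 (pderiv 1 f) := by
  rw [LamZ]
  have hsupp : ∀ i : ℤ, aop i (aop (-2 - i) f) ≠ 0 → i ∈ box B := by
    intro i hne
    rw [mem_box]
    by_contra hc
    push_neg at hc
    rcases le_or_gt i (B : ℤ) with h | h
    · -- i < -B
      have hiB : i < -(B : ℤ) := by omega
      apply hne
      rw [show aop (-2 - i) f = X (-2 - i).toNat * f from aop_pos (by omega) f,
        aop_neg (show i < 0 from by omega), pderiv_X_mul (by omega), hN _ (by omega),
        mul_zero, smul_zero]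
    · -- i > B
      apply hne
      rw [show aop (-2 - i) f
          = (((-(-2 - i)).toNat : ℕ) : ℚ) • pderiv (-(-2 - i)).toNat f from
            aop_neg (by omega) f,
        hN _ (by omega), smul_zero, aop_zero]
  have hfin : (∑ᶠ i : ℤ, aop i (aop (-2 - i) f))
      = ∑ i ∈ box B, aop i (aop (-2 - i) f) := by
    apply finsum_eq_sum_of_support_subset
    intro i hi
    rw [Function.mem_support] at hi
    exact Finset.mem_coe.mpr (hsupp i hi)
  have hsplit : box B = Finset.Icc (-(B : ℤ)) (-3)
      ∪ (({-2, -1, 0} : Finset ℤ) ∪ Finset.Icc 1 (B : ℤ)) := by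
    ext x
    simp only [mem_box, Finset.mem_union, Finset.mem_Icc, Finset.mem_insert,
      Finset.mem_singleton]
    omega
  have hd1 : Disjoint (Finset.Icc (-(B : ℤ)) (-3))
      (({-2, -1, 0} : Finset ℤ) ∪ Finset.Icc 1 (B : ℤ)) := by
    rw [Finset.disjoint_left]
    intro x hx hx'
    simp only [Finset.mem_Icc] at hx
    simp only [Finset.mem_union, Finset.mem_insert, Finset.mem_singleton,
      Finset.mem_Icc] at hx'
    omega
  have hd2 : Disjoint (({-2, -1, 0} : Finset ℤ)) (Finset.Icc 1 (B : ℤ)) := by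
    rw [Finset.disjoint_left]
    intro x hx hx'
    simp only [Finset.mem_insert, Finset.mem_singleton] at hx
    simp only [Finset.mem_Icc] at hx'
    omega
  rw [hfin, hsplit, Finset.sum_union hd1, Finset.sum_union hd2]
  have hmid : (∑ i ∈ ({-2, -1, 0} : Finset ℤ), aop i (aop (-2 - i) f))
      = pderiv 1 (pderiv 1 f) := by
    rw [show ({-2, -1, 0} : Finset ℤ) = insert (-2) (insert (-1) {0}) from rfl,
      Finset.sum_insert (by decide), Finset.sum_insert (by decide),
      Finset.sum_singleton]
    rw [show (-2 : ℤ) - (-2) = 0 from by norm_num, aop_zeroIdx, aop_zero]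
    rw [show (-2 : ℤ) - (-1) = -1 from by norm_num]
    rw [aop_neg (show (-1 : ℤ) < 0 from by norm_num) f]
    rw [aop_neg (show (-1 : ℤ) < 0 from by norm_num)]
    rw [Derivation.map_smul, aop_zeroIdx]
    norm_num
  have hpos : (∑ i ∈ Finset.Icc 1 (B : ℤ), aop i (aop (-2 - i) f)) = SEb B f := by
    rw [SEb]
    have hval : ∀ (i : ℤ) (a : ℕ), 0 < i → (a : ℤ) = i →
        aop i (aop (-2 - i) f) = ((a + 2 : ℕ) : ℚ) • (X a * pderiv (a + 2) f) := by
      intro i a hi ha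
      rw [show aop (-2 - i) f
          = (((-(-2 - i)).toNat : ℕ) : ℚ) • pderiv (-(-2 - i)).toNat f from
            aop_neg (by omega) f,
        aop_pos hi, mul_smul_comm, show (-(-2 - i)).toNat = a + 2 from by omega,
        show i.toNat = a from by omega]
    refine Finset.sum_bij_ne_zero (fun i _ _ => i.toNat) ?_ ?_ ?_ ?_
    · intro i h₁ h₂
      simp only [Finset.mem_Icc] at h₁ ⊢
      omega
    · intro i₁ h₁₁ h₁₂ i₂ h₂₁ h₂₂ heq
      simp only [Finset.mem_Icc] at h₁₁ h₂₁
      omega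
    · intro a ha hga
      simp only [Finset.mem_Icc] at ha
      refine ⟨(a : ℤ), by simp only [Finset.mem_Icc]; omega, ?_, by simp⟩
      rw [hval (a : ℤ) a (by omega) rfl]
      exact hga
    · intro i h₁ h₂
      simp only [Finset.mem_Icc] at h₁
      exact hval i i.toNat (by omega) (by omega)
  have hneg : (∑ i ∈ Finset.Icc (-(B : ℤ)) (-3), aop i (aop (-2 - i) f)) = SEb B f := by
    rw [SEb]
    have hval : ∀ (i : ℤ) (a : ℕ), i ≤ -3 → (a : ℤ) = -2 - i →
        aop i (aop (-2 - i) f) = ((a + 2 : ℕ) : ℚ) • (X a * pderiv (a + 2) f) := by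
      intro i a hi ha
      rw [show aop (-2 - i) f = X (-2 - i).toNat * f from aop_pos (by omega) f,
        aop_neg (show i < 0 from by omega), pderiv_X_mul (by omega),
        show (-2 - i).toNat = a from by omega, show (-i).toNat = a + 2 from by omega]
    refine Finset.sum_bij_ne_zero (fun i _ _ => (-2 - i).toNat) ?_ ?_ ?_ ?_
    · intro i h₁ h₂
      simp only [Finset.mem_Icc] at h₁ ⊢
      omega
    · intro i₁ h₁₁ h₁₂ i₂ h₂₁ h₂₂ heq
      simp only [Finset.mem_Icc] at h₁₁ h₂₁
      omega
    · intro a ha hga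
      simp only [Finset.mem_Icc] at ha
      have hda : a + 2 < N := by
        by_contra hd
        exact hga (by rw [hN _ (by omega), mul_zero, smul_zero])
      refine ⟨-2 - (a : ℤ), by simp only [Finset.mem_Icc]; omega, ?_, ?_⟩
      · rw [hval (-2 - (a : ℤ)) a (by omega) (by omega)]
        exact hga
      · omega
    · intro i h₁ h₂
      simp only [Finset.mem_Icc] at h₁
      exact hval i (-2 - i).toNat (by omega) (by omega)
  rw [hmid, hpos, hneg]
  module


lemma L0_eq (hN1 : 1 ≤ N) (hB : B = 2 * N + 3) (hN : ∀ n, N ≤ n → pderiv n f = 0) :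
    L0poly f = X 0 ^ 2 * pderiv 2 f + X 0 * SEb B f + (1/2 : ℚ) • SAm (-2) B f := by
  rw [L0poly]
  have hfin : (∑ᶠ i : ℕ, ∑ j ∈ Finset.range (i + 1),
        ((i + 2 : ℕ) : ℚ) • (X j * X (i - j) * pderiv (i + 2) f))
      = ∑ i ∈ Finset.range B, ∑ j ∈ Finset.range (i + 1),
        ((i + 2 : ℕ) : ℚ) • (X j * X (i - j) * pderiv (i + 2) f) := by
    apply finsum_eq_sum_of_support_subset
    intro i hi
    rw [Function.mem_support] at hi
    simp only [Finset.coe_range, Set.mem_Iio]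
    by_contra hc
    exact hi (Finset.sum_eq_zero fun j _ => by
      rw [hN (i + 2) (by omega), mul_zero, smul_zero])
  have hrect : (∑ i ∈ Finset.range B, ∑ j ∈ Finset.range (i + 1),
        ((i + 2 : ℕ) : ℚ) • (X j * X (i - j) * pderiv (i + 2) f))
      = ∑ p ∈ Finset.range B ×ˢ Finset.range B,
        ((p.1 + p.2 + 2 : ℕ) : ℚ) • (X p.1 * X p.2 * pderiv (p.1 + p.2 + 2) f) := by
    rw [Finset.sum_sigma']
    have hval : ∀ (i j a b : ℕ), j ≤ i → a = j → b = i - j →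
        ((i + 2 : ℕ) : ℚ) • (X j * X (i - j) * pderiv (i + 2) f)
          = ((a + b + 2 : ℕ) : ℚ) • (X a * X b * pderiv (a + b + 2) f) := by
      intro i j a b h ha hb
      rw [ha, hb, show j + (i - j) + 2 = i + 2 from by omega]
    refine Finset.sum_bij_ne_zero (fun p _ _ => (p.2, p.1 - p.2)) ?_ ?_ ?_ ?_
    · intro p h₁ h₂
      simp only [Finset.mem_sigma, Finset.mem_range] at h₁
      simp only [Finset.mem_product, Finset.mem_range]
      omega
    · intro p₁ h₁₁ h₁₂ p₂ h₂₁ h₂₂ heq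
      simp only [Finset.mem_sigma, Finset.mem_range] at h₁₁ h₂₁
      simp only [Prod.mk.injEq] at heq
      refine Sigma.ext (by omega) (heq_of_eq (by omega))
    · intro b hb hgb
      simp only [Finset.mem_product, Finset.mem_range] at hb
      have hd : b.1 + b.2 + 2 < N := by
        by_contra hd
        exact hgb (by rw [hN _ (by omega), mul_zero, smul_zero])
      refine ⟨⟨b.1 + b.2, b.1⟩, ?_, ?_, ?_⟩
      · simp only [Finset.mem_sigma, Finset.mem_range]
        omega
      · rw [hval (b.1 + b.2) b.1 b.1 b.2 (by omega) rfl (by omega)]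
        exact hgb
      · dsimp only
        rw [show b.1 + b.2 - b.1 = b.2 from by omega]
    · intro p h₁ h₂
      simp only [Finset.mem_sigma, Finset.mem_range] at h₁
      dsimp only
      exact hval p.1 p.2 p.2 (p.1 - p.2) (by omega) rfl rfl
  rw [hfin, hrect]
  have hsplit : ∀ p ∈ Finset.range B ×ˢ Finset.range B,
      ((p.1 + p.2 + 2 : ℕ) : ℚ) • (X p.1 * X p.2 * pderiv (p.1 + p.2 + 2) f) =
        (if p.1 = 0 ∧ p.2 = 0 then
          ((p.1 + p.2 + 2 : ℕ) : ℚ) • (X p.1 * X p.2 * pderiv (p.1 + p.2 + 2) f) else 0)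
      + (if p.1 = 0 ∧ 0 < p.2 then
          ((p.1 + p.2 + 2 : ℕ) : ℚ) • (X p.1 * X p.2 * pderiv (p.1 + p.2 + 2) f) else 0)
      + (if 0 < p.1 ∧ p.2 = 0 then
          ((p.1 + p.2 + 2 : ℕ) : ℚ) • (X p.1 * X p.2 * pderiv (p.1 + p.2 + 2) f) else 0)
      + (if 0 < p.1 ∧ 0 < p.2 then
          ((p.1 + p.2 + 2 : ℕ) : ℚ) • (X p.1 * X p.2 * pderiv (p.1 + p.2 + 2) f) else 0) := by
    intro p _
    rcases Nat.eq_zero_or_pos p.1 with h1 | h1 <;>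
      rcases Nat.eq_zero_or_pos p.2 with h2 | h2 <;>
      split_ifs <;> first | (exfalso; omega) | ring
  rw [Finset.sum_congr rfl hsplit, Finset.sum_add_distrib, Finset.sum_add_distrib,
    Finset.sum_add_distrib, ← Finset.sum_filter, ← Finset.sum_filter, ← Finset.sum_filter,
    ← Finset.sum_filter]
  have hS00 : (∑ p ∈ (Finset.range B ×ˢ Finset.range B).filter
        (fun p => p.1 = 0 ∧ p.2 = 0),
        ((p.1 + p.2 + 2 : ℕ) : ℚ) • (X p.1 * X p.2 * pderiv (p.1 + p.2 + 2) f))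
      = X 0 ^ 2 * pderiv 2 f + X 0 ^ 2 * pderiv 2 f := by
    rw [show (Finset.range B ×ˢ Finset.range B).filter (fun p => p.1 = 0 ∧ p.2 = 0)
        = {((0 : ℕ), (0 : ℕ))} from by
      ext p
      simp only [Finset.mem_filter, Finset.mem_product, Finset.mem_range,
        Finset.mem_singleton, Prod.ext_iff]
      omega]
    rw [Finset.sum_singleton]
    dsimp only
    rw [show ((0 : ℕ) + 0 + 2) = 2 from rfl,
      show ((2 : ℕ) : ℚ) = (2 : ℚ) from by norm_num, two_smul, sq]
  have hS0b : (∑ p ∈ (Finset.range B ×ˢ Finset.range B).filter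
        (fun p => p.1 = 0 ∧ 0 < p.2),
        ((p.1 + p.2 + 2 : ℕ) : ℚ) • (X p.1 * X p.2 * pderiv (p.1 + p.2 + 2) f))
      = X 0 * SEb B f := by
    rw [SEb, Finset.mul_sum]
    have hval : ∀ (a b : ℕ), a = 0 → 0 < b →
        ((a + b + 2 : ℕ) : ℚ) • (X a * X b * pderiv (a + b + 2) f)
          = X 0 * (((b + 2 : ℕ) : ℚ) • (X b * pderiv (b + 2) f)) := by
      intro a b ha hb
      rw [ha, show 0 + b + 2 = b + 2 from by omega, mul_smul_comm, mul_assoc]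
    refine Finset.sum_bij_ne_zero (fun p _ _ => p.2) ?_ ?_ ?_ ?_
    · intro p h₁ h₂
      simp only [Finset.mem_filter, Finset.mem_product, Finset.mem_range] at h₁
      simp only [Finset.mem_Icc]
      omega
    · intro p₁ h₁₁ h₁₂ p₂ h₂₁ h₂₂ heq
      simp only [Finset.mem_filter, Finset.mem_product, Finset.mem_range] at h₁₁ h₂₁
      exact Prod.ext (by omega) heq
    · intro b hb hgb
      simp only [Finset.mem_Icc] at hb
      have hd : b + 2 < N := by
        by_contra hd
        refine hgb ?_
        rw [hN _ (by omega), mul_zero, smul_zero, mul_zero]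
      refine ⟨(0, b), ?_, ?_, rfl⟩
      · simp only [Finset.mem_filter, Finset.mem_product, Finset.mem_range]
        exact ⟨⟨by omega, by omega⟩, trivial, by omega⟩
      · dsimp only
        rw [hval 0 b rfl (by omega)]
        exact hgb
    · intro p h₁ h₂
      simp only [Finset.mem_filter, Finset.mem_product, Finset.mem_range] at h₁
      exact hval p.1 p.2 h₁.2.1 h₁.2.2
  have hSa0 : (∑ p ∈ (Finset.range B ×ˢ Finset.range B).filter
        (fun p => 0 < p.1 ∧ p.2 = 0),
        ((p.1 + p.2 + 2 : ℕ) : ℚ) • (X p.1 * X p.2 * pderiv (p.1 + p.2 + 2) f))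
      = X 0 * SEb B f := by
    rw [SEb, Finset.mul_sum]
    have hval : ∀ (a b : ℕ), 0 < a → b = 0 →
        ((a + b + 2 : ℕ) : ℚ) • (X a * X b * pderiv (a + b + 2) f)
          = X 0 * (((a + 2 : ℕ) : ℚ) • (X a * pderiv (a + 2) f)) := by
      intro a b ha hb
      rw [hb, show a + 0 + 2 = a + 2 from by omega, mul_smul_comm]
      congr 1
      ring
    refine Finset.sum_bij_ne_zero (fun p _ _ => p.1) ?_ ?_ ?_ ?_
    · intro p h₁ h₂
      simp only [Finset.mem_filter, Finset.mem_product, Finset.mem_range] at h₁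
      simp only [Finset.mem_Icc]
      omega
    · intro p₁ h₁₁ h₁₂ p₂ h₂₁ h₂₂ heq
      simp only [Finset.mem_filter, Finset.mem_product, Finset.mem_range] at h₁₁ h₂₁
      exact Prod.ext heq (by omega)
    · intro b hb hgb
      simp only [Finset.mem_Icc] at hb
      have hd : b + 2 < N := by
        by_contra hd
        refine hgb ?_
        rw [hN _ (by omega), mul_zero, smul_zero, mul_zero]
      refine ⟨(b, 0), ?_, ?_, rfl⟩
      · simp only [Finset.mem_filter, Finset.mem_product, Finset.mem_range]
        exact ⟨⟨by omega, by omega⟩, by omega, trivial⟩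
      · dsimp only
        rw [hval b 0 (by omega) rfl]
        exact hgb
    · intro p h₁ h₂
      simp only [Finset.mem_filter, Finset.mem_product, Finset.mem_range] at h₁
      exact hval p.1 p.2 h₁.2.1 h₁.2.2
  have hSpos : (∑ p ∈ (Finset.range B ×ˢ Finset.range B).filter
        (fun p => 0 < p.1 ∧ 0 < p.2),
        ((p.1 + p.2 + 2 : ℕ) : ℚ) • (X p.1 * X p.2 * pderiv (p.1 + p.2 + 2) f))
      = SAm (-2) B f := by
    rw [SAm, ← Finset.sum_product']
    have hval : ∀ (a b : ℕ), 0 < a → 0 < b →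
        ((a + b + 2 : ℕ) : ℚ) • (X a * X b * pderiv (a + b + 2) f)
          = (if 0 < (a : ℤ) + (b : ℤ) - (-2) then
              ((((a : ℤ) + (b : ℤ) - (-2)).toNat : ℕ) : ℚ) •
                (X a * X b * pderiv ((a : ℤ) + (b : ℤ) - (-2)).toNat f)
            else 0) := by
      intro a b ha hb
      rw [if_pos (by omega), show ((a : ℤ) + (b : ℤ) - (-2)).toNat = a + b + 2 from by omega]
    refine Finset.sum_bij_ne_zero (fun p _ _ => p) ?_ ?_ ?_ ?_
    · intro p h₁ h₂
      simp only [Finset.mem_filter, Finset.mem_product, Finset.mem_range] at h₁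
      simp only [Finset.mem_product, Finset.mem_Icc]
      omega
    · intro p₁ h₁₁ h₁₂ p₂ h₂₁ h₂₂ heq
      exact heq
    · intro b hb hgb
      simp only [Finset.mem_product, Finset.mem_Icc] at hb
      have hd : ((b.1 : ℤ) + (b.2 : ℤ) - (-2)).toNat < N := by
        by_contra hd
        exact hgb (by rw [if_pos (by omega), hN _ (by omega), mul_zero, smul_zero])
      refine ⟨b, ?_, ?_, rfl⟩
      · simp only [Finset.mem_filter, Finset.mem_product, Finset.mem_range]
        omega
      · rw [hval b.1 b.2 (by omega) (by omega)]
        exact hgb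
    · intro p h₁ h₂
      simp only [Finset.mem_filter, Finset.mem_product, Finset.mem_range] at h₁
      exact hval p.1 p.2 h₁.2.1 h₁.2.2
  rw [hS00, hS0b, hSa0, hSpos]
  module

end KL

end Stmt13

open MvPolynomial Stmt13 in
/-- As operators on the ring of polynomials in
`s₀, s₁, s₂, …`, one has `L₀ + L₂ = s₀² ∂/∂s₂ + s₀ Λ₋₂ + M₋₂` and
`K₀ + K₂ = M₂`. -/
theorem L_and_K_in_terms_of_bosonic_operators :
    (∀ f : MvPolynomial ℕ ℚ,
      L0poly f + L2poly f
        = X 0 ^ 2 * pderiv 2 f + X 0 * LamZ (-2) f + Mord (-2) f)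
    ∧ (∀ f : MvPolynomial ℕ ℚ, K0poly f + K2poly f = Mord 2 f) := by
  have hbound : ∀ f : MvPolynomial ℕ ℚ,
      ∃ N : ℕ, 1 ≤ N ∧ ∀ n, N ≤ n → pderiv n f = 0 := by
    intro f
    refine ⟨f.vars.sup id + 1, by omega, fun n hn =>
      pderiv_eq_zero_of_notMem_vars fun hmem => ?_⟩
    have h := Finset.le_sup (f := id) hmem
    simp only [id] at h
    omega
  constructor
  · intro f
    obtain ⟨N, hN1, hN⟩ := hbound f
    rw [L0_eq hN1 rfl hN, L2_eq hN1 rfl hN, Lam_eq hN1 rfl hN,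
      Mord_eq (Or.inl rfl) hN1 rfl hN, mul_add, mul_smul_comm]
    module
  · intro f
    obtain ⟨N, hN1, hN⟩ := hbound f
    rw [K0_eq hN1 rfl hN, K2_eq hN1 rfl hN, Mord_eq (Or.inr rfl) hN1 rfl hN]
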